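/- arXiv:0809.0245 — 3 statements merged into one kernel-verified Lean document; each statement's English description precedes it below -/
import Mathlib

section
/- Let R⁺ be the positive roots of an irreducible root system with simple roots indexed by I, and let J ⊆ I. Let R⁺(J) denote the positive roots supported on J. If A ⊆ R⁺ is a J-antichain (i.e., A ∩ R⁺(J) = ∅, no two distinct elements of A are comparable in the dominance order, and α - α_j ∉ R for all α ∈ A and j ∈ J), then for every α ∈ A and every γ ∈ R⁺(J), we have α - γ ∉ R. -/
open RealInnerProductSpace

structure RootSys (n : ℕ) where
  R : Set (EuclideanSpace ℝ (Fin n))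
  finite : R.Finite
  zero_not_mem : (0 : EuclideanSpace ℝ (Fin n)) ∉ R
  spans : Submodule.span ℝ R = ⊤
  neg_mem : ∀ α ∈ R, -α ∈ R
  reduced : ∀ α ∈ R, ∀ t : ℝ, t • α ∈ R → t = 1 ∨ t = -1
  reflect_mem : ∀ α ∈ R, ∀ β ∈ R, β - (2 * ⟪α, β⟫ / ⟪α, α⟫) • α ∈ R
  crystal : ∀ α ∈ R, ∀ β ∈ R, ∃ k : ℤ, 2 * ⟪α, β⟫ / ⟪α, α⟫ = (k : ℝ)
  irreducible : ∀ S ⊆ R, (∀ α ∈ S, ∀ β ∈ R \ S, ⟪α, β⟫ = 0) → S = ∅ ∨ S = R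

structure BasedRootSys (n : ℕ) extends RootSys n where
  simple : Fin n → EuclideanSpace ℝ (Fin n)
  simple_mem : ∀ i, simple i ∈ R
  simple_indep : LinearIndependent ℝ simple
  pos_or_neg : ∀ α ∈ R, α ∈ AddSubmonoid.closure (Set.range simple) ∨
      -α ∈ AddSubmonoid.closure (Set.range simple)

namespace BasedRootSys

variable {n : ℕ} (RS : BasedRootSys n)

/-- `Q⁺`, the nonnegative integer span of the simple roots. -/
noncomputable def Qplus : AddSubmonoid (EuclideanSpace ℝ (Fin n)) :=
  AddSubmonoid.closure (Set.range RS.simple)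

/-- The dominance order. -/
def le (α β : EuclideanSpace ℝ (Fin n)) : Prop := β - α ∈ RS.Qplus

/-- The positive roots. -/
def Rpos : Set (EuclideanSpace ℝ (Fin n)) := {α ∈ RS.R | α ∈ RS.Qplus}

end BasedRootSys

namespace BasedRootSys

variable {n : ℕ} (RS : BasedRootSys n)

/-- `R(J)`, the roots supported on `J`. -/
noncomputable def RJ (J : Set (Fin n)) : Set (EuclideanSpace ℝ (Fin n)) :=
  {α ∈ RS.R | α ∈ AddSubgroup.closure (RS.simple '' J)}

/-- `R⁺(J)`, the positive roots supported on `J`. -/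
noncomputable def RposJ (J : Set (Fin n)) : Set (EuclideanSpace ℝ (Fin n)) :=
  RS.RJ J ∩ RS.Rpos

/-- A `J`-antichain in `R⁺`. -/
def IsJAntichain (J : Set (Fin n)) (A : Set (EuclideanSpace ℝ (Fin n))) : Prop :=
  A ⊆ RS.Rpos ∧ A ∩ RS.RposJ J = ∅ ∧
  (∀ α ∈ A, ∀ β ∈ A, α ≠ β → ¬ RS.le α β) ∧
  (∀ α ∈ A, ∀ j ∈ J, α - RS.simple j ∉ RS.R)

/-- The ideal `Φ(A)` generated by `A`. -/
def PhiOf (A : Set (EuclideanSpace ℝ (Fin n))) : Set (EuclideanSpace ℝ (Fin n)) :=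
  {α ∈ RS.Rpos | ∃ β ∈ A, RS.le β α}

/-- A `J`-ideal in `R⁺`. -/
def IsJIdeal (J : Set (Fin n)) (Φ : Set (EuclideanSpace ℝ (Fin n))) : Prop :=
  Φ ⊆ RS.Rpos ∧ Φ ∩ RS.RposJ J = ∅ ∧
  (∀ α ∈ Φ, ∀ β, (β ∈ RS.Rpos ∨ β ∈ RS.RJ J) → α + β ∈ RS.R → α + β ∈ Φ)

/-- The set of minimal elements of a subset of `R⁺` in the dominance order. -/
def minimals (Φ : Set (EuclideanSpace ℝ (Fin n))) : Set (EuclideanSpace ℝ (Fin n)) :=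
  {α ∈ Φ | ∀ β ∈ Φ, RS.le β α → β = α}

end BasedRootSys

/-!
Induct on the height of `γ ∈ R⁺(J)`. Since `⟪γ, γ⟫ > 0`, some simple root `α_j` occurring in `γ`
(hence `j ∈ J`) has `⟪γ, α_j⟫ > 0`. If `γ = α_j` there is nothing to prove; otherwise
`γ - α_j ∈ R⁺(J)` has smaller height. If `α - γ` were a root, then `α - γ + α_j ∉ R` (induction)
and `α - α_j ∉ R` would give `⟪α - γ, α_j⟫ ≥ 0 ≥ ⟪α, α_j⟫`, contradicting `⟪γ, α_j⟫ > 0`.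
Both inequalities are instances of the basic fact that `α - β` is a root whenever `α ≠ β` are
roots with `⟪α, β⟫ > 0`.
-/

theorem eq_of_inner_self_le_inner {F : Type*} [NormedAddCommGroup F] [InnerProductSpace ℝ F]
    {x y : F} (hx : ⟪x, x⟫ ≤ ⟪x, y⟫) (hy : ⟪y, y⟫ ≤ ⟪x, y⟫) : x = y := by
  rw [← sub_eq_zero, ← inner_self_eq_zero (𝕜 := ℝ)]
  exact le_antisymm (by rw [real_inner_sub_sub_self]; linarith) real_inner_self_nonneg

theorem Module.Basis.exists_repr_mul_inner_pos {ι F : Type*} [Fintype ι] [NormedAddCommGroup F]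
    [InnerProductSpace ℝ F] (b : Module.Basis ι ℝ F) {x : F} (hx : x ≠ 0) :
    ∃ i, 0 < b.repr x i * ⟪b i, x⟫ := by
  by_contra! h
  have hxx : ⟪x, x⟫ ≤ 0 :=
    calc ⟪x, x⟫ = ⟪∑ i, b.repr x i • b i, x⟫ := by rw [b.sum_repr]
      _ = ∑ i, b.repr x i * ⟪b i, x⟫ := by simp only [sum_inner, real_inner_smul_left]
      _ ≤ 0 := Finset.sum_nonpos fun i _ => h i
  exact hx (real_inner_self_nonpos.mp hxx)

namespace RootSys

variable {n : ℕ} (RS : RootSys n)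

theorem cartan_eq_one_or_inner_self_le {α β : EuclideanSpace ℝ (Fin n)} (hα : α ∈ RS.R)
    (hβ : β ∈ RS.R) (hαβ : 0 < ⟪α, β⟫) : 2 * ⟪α, β⟫ / ⟪α, α⟫ = 1 ∨ ⟪α, α⟫ ≤ ⟪α, β⟫ := by
  obtain ⟨k, hk⟩ := RS.crystal α hα β hβ
  have hαα : 0 < ⟪α, α⟫ := real_inner_self_pos.mpr (ne_of_mem_of_not_mem hα RS.zero_not_mem)
  have hk_pos : 0 < k := by
    have : (0 : ℝ) < k := hk ▸ by positivity
    exact_mod_cast this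
  rcases (show k = 1 ∨ 2 ≤ k by omega) with rfl | hk2
  · exact Or.inl (by exact_mod_cast hk)
  · have : (2 : ℝ) ≤ 2 * ⟪α, β⟫ / ⟪α, α⟫ := hk ▸ by exact_mod_cast hk2
    rw [le_div_iff₀ hαα] at this
    exact Or.inr (by linarith)

theorem sub_mem_of_inner_pos {α β : EuclideanSpace ℝ (Fin n)} (hα : α ∈ RS.R) (hβ : β ∈ RS.R)
    (hαβ : 0 < ⟪α, β⟫) (hne : α ≠ β) : α - β ∈ RS.R := by
  rcases RS.cartan_eq_one_or_inner_self_le hα hβ hαβ with h | hα_le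
  · have hrefl := RS.reflect_mem α hα β hβ
    rw [h, one_smul] at hrefl
    simpa using RS.neg_mem _ hrefl
  rw [real_inner_comm] at hαβ
  rcases RS.cartan_eq_one_or_inner_self_le hβ hα hαβ with h | hβ_le
  · have hrefl := RS.reflect_mem β hβ α hα
    rwa [h, one_smul] at hrefl
  rw [real_inner_comm α β] at hβ_le
  exact absurd (eq_of_inner_self_le_inner hα_le hβ_le) hne

theorem inner_nonpos_of_sub_notMem {α β : EuclideanSpace ℝ (Fin n)} (hα : α ∈ RS.R)
    (hβ : β ∈ RS.R) (hne : α ≠ β) (h : α - β ∉ RS.R) : ⟪α, β⟫ ≤ 0 :=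
  not_lt.mp fun hpos => h (RS.sub_mem_of_inner_pos hα hβ hpos hne)

end RootSys

namespace BasedRootSys

variable {n : ℕ} (RS : BasedRootSys n)

noncomputable def basis : Module.Basis (Fin n) ℝ (EuclideanSpace ℝ (Fin n)) :=
  basisOfLinearIndependentOfCardEqFinrank' RS.simple RS.simple_indep (by simp)

@[simp]
theorem coe_basis : ⇑RS.basis = RS.simple :=
  coe_basisOfLinearIndependentOfCardEqFinrank' ..

@[simp]
theorem repr_simple (i : Fin n) : RS.basis.repr (RS.simple i) = Finsupp.single i 1 := by
  rw [← RS.coe_basis, Module.Basis.repr_self]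

theorem repr_nonneg {x : EuclideanSpace ℝ (Fin n)} (hx : x ∈ RS.Qplus) (i : Fin n) :
    0 ≤ RS.basis.repr x i := by
  induction hx using AddSubmonoid.closure_induction with
  | mem y hy =>
    obtain ⟨j, rfl⟩ := hy
    rw [repr_simple, Finsupp.single_apply]
    split_ifs <;> norm_num
  | zero => simp
  | add y z _ _ hy hz => rw [map_add]; exact add_nonneg hy hz

theorem repr_eq_zero_of_mem_closure {J : Set (Fin n)} {x : EuclideanSpace ℝ (Fin n)}
    (hx : x ∈ AddSubgroup.closure (RS.simple '' J)) {i : Fin n} (hi : i ∉ J) :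
    RS.basis.repr x i = 0 := by
  induction hx using AddSubgroup.closure_induction with
  | mem y hy =>
    obtain ⟨j, hj, rfl⟩ := hy
    simp [show j ≠ i from fun h => hi (h ▸ hj)]
  | zero => simp
  | add y z _ _ hy hz => simp [hy, hz]
  | neg y _ hy => simp [hy]

noncomputable def height (x : EuclideanSpace ℝ (Fin n)) : ℝ := ∑ i, RS.basis.repr x i

theorem height_nonneg {x : EuclideanSpace ℝ (Fin n)} (hx : x ∈ RS.Qplus) : 0 ≤ RS.height x :=
  Finset.sum_nonneg fun i _ => RS.repr_nonneg hx i

theorem height_sub_simple (x : EuclideanSpace ℝ (Fin n)) (j : Fin n) :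
    RS.height (x - RS.simple j) = RS.height x - 1 := by
  simp [height, Finset.sum_sub_distrib, Finsupp.single_apply]

theorem simple_mem_RposJ {J : Set (Fin n)} {j : Fin n} (hj : j ∈ J) :
    RS.simple j ∈ RS.RposJ J :=
  ⟨⟨RS.simple_mem j, AddSubgroup.subset_closure ⟨j, hj, rfl⟩⟩, RS.simple_mem j,
    AddSubmonoid.subset_closure ⟨j, rfl⟩⟩

theorem eq_simple_of_le_simple {γ : EuclideanSpace ℝ (Fin n)} (hγ : γ ∈ RS.Rpos) {j : Fin n}
    (hle : RS.le γ (RS.simple j)) : γ = RS.simple j := by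
  have hrepr : RS.basis.repr γ = Finsupp.single j (RS.basis.repr γ j) := by
    ext i
    rcases eq_or_ne j i with rfl | hji
    · simp
    · have := RS.repr_nonneg hle i
      simp only [map_sub, Finsupp.sub_apply, repr_simple, Finsupp.single_apply, if_neg hji] at this ⊢
      linarith [RS.repr_nonneg hγ.2 i]
  have hγ_eq : γ = RS.basis.repr γ j • RS.simple j :=
    RS.basis.repr.injective (by rw [map_smul, repr_simple, Finsupp.smul_single_one]; exact hrepr)
  rcases RS.reduced _ (RS.simple_mem j) _ (hγ_eq ▸ hγ.1) with h | h
  · rw [hγ_eq, h, one_smul]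
  · linarith [RS.repr_nonneg hγ.2 j]

theorem exists_repr_pos_inner_pos {γ : EuclideanSpace ℝ (Fin n)} (hγ : γ ∈ RS.Rpos) :
    ∃ j, 0 < RS.basis.repr γ j ∧ 0 < ⟪γ, RS.simple j⟫ := by
  obtain ⟨j, hj⟩ := RS.basis.exists_repr_mul_inner_pos (ne_of_mem_of_not_mem hγ.1 RS.zero_not_mem)
  rcases pos_and_pos_or_neg_and_neg_of_mul_pos hj with ⟨h_repr, h_inner⟩ | ⟨h_repr, -⟩
  · exact ⟨j, h_repr, by rwa [real_inner_comm, ← RS.coe_basis]⟩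
  · exact absurd (RS.repr_nonneg hγ.2 j) h_repr.not_ge

theorem sub_simple_mem_RposJ {J : Set (Fin n)} {γ : EuclideanSpace ℝ (Fin n)}
    (hγ : γ ∈ RS.RposJ J) {j : Fin n} (hj : j ∈ J) (hpos : 0 < ⟪γ, RS.simple j⟫)
    (hne : γ ≠ RS.simple j) : γ - RS.simple j ∈ RS.RposJ J := by
  have hroot : γ - RS.simple j ∈ RS.R :=
    RS.sub_mem_of_inner_pos hγ.1.1 (RS.simple_mem j) hpos hne
  refine ⟨⟨hroot, sub_mem hγ.1.2 (AddSubgroup.subset_closure ⟨j, hj, rfl⟩)⟩, hroot, ?_⟩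
  refine (RS.pos_or_neg _ hroot).resolve_right fun hneg => hne (RS.eq_simple_of_le_simple hγ.2 ?_)
  rwa [neg_sub] at hneg

variable {RS} in
theorem IsJAntichain.sub_notMem_of_height_lt {J : Set (Fin n)}
    {A : Set (EuclideanSpace ℝ (Fin n))} (hA : RS.IsJAntichain J A)
    {α : EuclideanSpace ℝ (Fin n)} (hα : α ∈ A) (N : ℕ) :
    ∀ γ ∈ RS.RposJ J, RS.height γ < N → α - γ ∉ RS.R := by
  obtain ⟨hA_pos, hA_disj, -, hA_simple⟩ := hA
  have hα_notJ : ∀ γ ∈ RS.RposJ J, α ≠ γ := fun γ hγ h =>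
    (Set.eq_empty_iff_forall_notMem.mp hA_disj) α ⟨hα, h ▸ hγ⟩
  induction N with
  | zero =>
    intro γ hγ hlt
    exact absurd (RS.height_nonneg hγ.2.2) (by push_cast at hlt; linarith)
  | succ N ih =>
    intro γ hγ hlt hαγ
    obtain ⟨j, hj_repr, hj_inner⟩ := RS.exists_repr_pos_inner_pos hγ.2
    have hjJ : j ∈ J := by_contra fun hj => hj_repr.ne' (RS.repr_eq_zero_of_mem_closure hγ.1.2 hj)
    by_cases hγj : γ = RS.simple j
    · exact hA_simple α hα j hjJ (hγj ▸ hαγ)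
    have hγ' := RS.sub_simple_mem_RposJ hγ hjJ hj_inner hγj
    have hα_add : α - γ + RS.simple j ∉ RS.R := by
      rw [show α - γ + RS.simple j = α - (γ - RS.simple j) by abel]
      exact ih _ hγ' (by rw [height_sub_simple]; push_cast at hlt; linarith)
    have hαγ_ne : α - γ ≠ -RS.simple j := fun h =>
      hα_notJ _ hγ' (by rw [sub_eq_iff_eq_add.mp h]; abel)
    have hαγ_inner : ⟪α - γ, -RS.simple j⟫ ≤ 0 :=
      RS.inner_nonpos_of_sub_notMem hαγ (RS.neg_mem _ (RS.simple_mem j)) hαγ_ne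
        (by rwa [sub_neg_eq_add])
    have hα_inner : ⟪α, RS.simple j⟫ ≤ 0 :=
      RS.inner_nonpos_of_sub_notMem (hA_pos hα).1 (RS.simple_mem j)
        (hα_notJ _ (RS.simple_mem_RposJ hjJ)) (hA_simple α hα j hjJ)
    have hγ_inner_eq : ⟪γ, RS.simple j⟫ = ⟪α, RS.simple j⟫ + ⟪α - γ, -RS.simple j⟫ := by
      rw [inner_neg_right, inner_sub_left]; ring
    linarith

end BasedRootSys

/-- If `A` is a `J`-antichain then `α - γ ∉ R` for all `α ∈ A`, `γ ∈ R⁺(J)`. -/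
theorem stmt_3 {n : ℕ} (RS : BasedRootSys n) (J : Set (Fin n))
    (A : Set (EuclideanSpace ℝ (Fin n))) (hA : RS.IsJAntichain J A) :
    ∀ α ∈ A, ∀ γ ∈ RS.RposJ J, α - γ ∉ RS.R := by
  intro α hα γ hγ
  exact hA.sub_notMem_of_height_lt hα (⌊RS.height γ⌋₊ + 1) γ hγ
    (by exact_mod_cast Nat.lt_floor_add_one _)
end

section
/- Let A be an antichain in R⁺ and Φ(A) the ideal it generates. Then Φ(A) has nilpotence k (i.e., no sum of k+1 not-necessarily-distinct elements of Φ(A) is a root) if and only if no sum of k+1 not-necessarily-distinct elements of A is ≤ θ, where θ is the highest root. -/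
open RealInnerProductSpace

/-! If `Σ aᵢ ≤ θ` with `aᵢ ∈ A`, write `θ = Σ aᵢ + Σ s` with `s` a multiset of positive roots
and absorb the members of `s` one at a time, keeping the total a root and each summand a
positive root above `aᵢ`. For `δ ∈ s` and total `γ`: if `⟪γ, δ⟫ > 0` then `γ - δ` is a root and
`δ` is dropped; otherwise `⟪δ, γ⟫ ≤ 0 < ⟪δ, δ⟫` forces `δ` to pair negatively with a summand or
with another member of `s`, and their sum is a root that replaces both. When `s` is empty the
summands lie in `Φ(A)` and add up to a root. The converse is monotonicity of `≤`. -/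

lemma real_inner_multiset_sum_nonneg {E : Type*} [NormedAddCommGroup E] [InnerProductSpace ℝ E]
    {δ : E} {t : Multiset E} (ht : ∀ y ∈ t, 0 ≤ ⟪δ, y⟫) : 0 ≤ ⟪δ, t.sum⟫ := by
  rw [← innerₛₗ_apply_apply (𝕜 := ℝ), map_multiset_sum]
  exact Multiset.sum_nonneg fun x hx => by
    obtain ⟨y, hy, rfl⟩ := Multiset.mem_map.1 hx
    exact ht y hy

namespace BasedRootSys

variable {n : ℕ} (RS : BasedRootSys n)

noncomputable def simpleBasis : Module.Basis (Fin n) ℝ (EuclideanSpace ℝ (Fin n)) :=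
  basisOfLinearIndependentOfCardEqFinrank' RS.simple RS.simple_indep (by simp)

lemma simpleBasis_repr_nonneg {x : EuclideanSpace ℝ (Fin n)} (hx : x ∈ RS.Qplus) (i : Fin n) :
    0 ≤ RS.simpleBasis.repr x i := by
  induction hx using AddSubmonoid.closure_induction with
  | mem y hy =>
    obtain ⟨j, rfl⟩ := hy
    rw [show RS.simple j = RS.simpleBasis j by simp [simpleBasis], Module.Basis.repr_self]
    exact Finsupp.single_nonneg.2 zero_le_one i
  | zero => simp
  | add x y _ _ hx hy => simpa using add_nonneg hx hy

lemma eq_zero_of_add_eq_zero_of_mem_Qplus {x y : EuclideanSpace ℝ (Fin n)} (hx : x ∈ RS.Qplus)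
    (hy : y ∈ RS.Qplus) (h : x + y = 0) : x = 0 := by
  refine RS.simpleBasis.repr.injective (Finsupp.ext fun i => ?_)
  have hi := congrArg (fun z => RS.simpleBasis.repr z i) h
  simp only [map_add, Finsupp.add_apply, map_zero, Finsupp.coe_zero, Pi.zero_apply] at hi ⊢
  linarith [RS.simpleBasis_repr_nonneg hx i, RS.simpleBasis_repr_nonneg hy i]

lemma ne_zero_of_mem_R {α : EuclideanSpace ℝ (Fin n)} (hα : α ∈ RS.R) : α ≠ 0 :=
  fun h => RS.zero_not_mem (h ▸ hα)

lemma simple_mem_Rpos (i : Fin n) : RS.simple i ∈ RS.Rpos :=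
  ⟨RS.simple_mem i, AddSubmonoid.subset_closure ⟨i, rfl⟩⟩

lemma exists_multiset_Rpos_sum_eq {x : EuclideanSpace ℝ (Fin n)} (hx : x ∈ RS.Qplus) :
    ∃ s : Multiset (EuclideanSpace ℝ (Fin n)), (∀ y ∈ s, y ∈ RS.Rpos) ∧ s.sum = x := by
  obtain ⟨s, hs, rfl⟩ := AddSubmonoid.exists_multiset_of_mem_closure hx
  refine ⟨s, fun y hy => ?_, rfl⟩
  obtain ⟨i, rfl⟩ := hs y hy
  exact RS.simple_mem_Rpos i

lemma le.refl (α : EuclideanSpace ℝ (Fin n)) : RS.le α α := by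
  simp [le, RS.Qplus.zero_mem]

variable {RS} in
lemma le.trans {α β γ : EuclideanSpace ℝ (Fin n)} (h₁ : RS.le α β) (h₂ : RS.le β γ) :
    RS.le α γ := by
  simpa [le] using RS.Qplus.add_mem h₂ h₁

variable {RS} in
lemma le_add_of_mem_Qplus (α : EuclideanSpace ℝ (Fin n)) {δ : EuclideanSpace ℝ (Fin n)}
    (hδ : δ ∈ RS.Qplus) : RS.le α (α + δ) := by
  simpa [le] using hδ

variable {RS} in
lemma sum_le_sum {ι : Type*} [Fintype ι] {f g : ι → EuclideanSpace ℝ (Fin n)}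
    (h : ∀ i, RS.le (f i) (g i)) : RS.le (∑ i, f i) (∑ i, g i) := by
  rw [le, ← Finset.sum_sub_distrib]
  exact RS.Qplus.sum_mem fun i _ => h i

lemma cartan_eq_one_or_inner_self_le {α β : EuclideanSpace ℝ (Fin n)} (hα : α ∈ RS.R)
    (hβ : β ∈ RS.R) (h : 0 < ⟪α, β⟫) : 2 * ⟪α, β⟫ / ⟪α, α⟫ = 1 ∨ ⟪α, α⟫ ≤ ⟪α, β⟫ := by
  obtain ⟨k, hk⟩ := RS.crystal α hα β hβ
  have hαα : 0 < ⟪α, α⟫ := real_inner_self_pos.2 (RS.ne_zero_of_mem_R hα)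
  have hk_pos : (0 : ℝ) < k := hk ▸ by positivity
  rcases (show k = 1 ∨ 2 ≤ k by norm_cast at hk_pos; omega) with rfl | hk2
  · exact Or.inl (by simpa using hk)
  · right
    have : (2 : ℝ) ≤ 2 * ⟪α, β⟫ / ⟪α, α⟫ := hk ▸ by exact_mod_cast hk2
    rw [le_div_iff₀ hαα] at this
    linarith

lemma eq_or_sub_mem_of_inner_pos {α β : EuclideanSpace ℝ (Fin n)} (hα : α ∈ RS.R)
    (hβ : β ∈ RS.R) (h : 0 < ⟪α, β⟫) : α = β ∨ α - β ∈ RS.R := by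
  rcases RS.cartan_eq_one_or_inner_self_le hβ hα (real_inner_comm α β ▸ h) with h₁ | hβα
  · have h := RS.reflect_mem β hβ α hα
    rw [h₁, one_smul] at h
    exact Or.inr h
  rcases RS.cartan_eq_one_or_inner_self_le hα hβ h with h₁ | hαβ
  · have h := RS.neg_mem _ (RS.reflect_mem α hα β hβ)
    rw [h₁, one_smul, neg_sub] at h
    exact Or.inr h
  left
  rw [← sub_eq_zero, ← real_inner_self_nonpos, real_inner_sub_sub_self]
  linarith [real_inner_comm α β]

lemma add_mem_Rpos_of_inner_neg {α β : EuclideanSpace ℝ (Fin n)} (hα : α ∈ RS.Rpos)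
    (hβ : β ∈ RS.Rpos) (h : ⟪α, β⟫ < 0) : α + β ∈ RS.Rpos := by
  refine ⟨?_, RS.Qplus.add_mem hα.2 hβ.2⟩
  have hpos : 0 < ⟪α, -β⟫ := by rw [inner_neg_right]; linarith
  rcases RS.eq_or_sub_mem_of_inner_pos hα.1 (RS.neg_mem β hβ.1) hpos with heq | hsub
  · exact absurd (RS.eq_zero_of_add_eq_zero_of_mem_Qplus hα.2 hβ.2 (by rw [heq]; abel))
      (RS.ne_zero_of_mem_R hα.1)
  · simpa using hsub

variable {ι : Type*} [Fintype ι]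

lemma sum_add_sum_mem_or_exists_add_mem_Rpos [Nonempty ι] {β : ι → EuclideanSpace ℝ (Fin n)}
    (hβ : ∀ i, β i ∈ RS.Rpos) {δ : EuclideanSpace ℝ (Fin n)} (hδ : δ ∈ RS.Rpos)
    {t : Multiset (EuclideanSpace ℝ (Fin n))} (ht : ∀ y ∈ t, y ∈ RS.Rpos)
    (hγ : ∑ i, β i + (δ ::ₘ t).sum ∈ RS.R) :
    ∑ i, β i + t.sum ∈ RS.R ∨ (∃ y ∈ t, y + δ ∈ RS.Rpos) ∨ ∃ i, β i + δ ∈ RS.Rpos := by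
  set γ := ∑ i, β i + (δ ::ₘ t).sum
  have hγδ : γ - δ = ∑ i, β i + t.sum := by simp only [γ, Multiset.sum_cons]; abel
  by_cases hpos : 0 < ⟪γ, δ⟫
  · refine (RS.eq_or_sub_mem_of_inner_pos hγ hδ.1 hpos).elim (fun heq => ?_) (Or.inl <| hγδ ▸ ·)
    classical
    obtain ⟨i₀⟩ := ‹Nonempty ι›
    have hrest : ∑ i ∈ Finset.univ.erase i₀, β i + t.sum ∈ RS.Qplus :=
      RS.Qplus.add_mem (RS.Qplus.sum_mem fun i _ => (hβ i).2)
        (RS.Qplus.multiset_sum_mem t fun y hy => (ht y hy).2)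
    have hzero : β i₀ + (∑ i ∈ Finset.univ.erase i₀, β i + t.sum) = 0 := by
      rw [← add_assoc, Finset.add_sum_erase _ _ (Finset.mem_univ i₀), ← hγδ, heq, sub_self]
    exact absurd (RS.eq_zero_of_add_eq_zero_of_mem_Qplus (hβ i₀).2 hrest hzero)
      (RS.ne_zero_of_mem_R (hβ i₀).1)
  · right
    by_contra! ⟨hy, hi⟩
    have hyδ : ∀ y ∈ t, 0 ≤ ⟪δ, y⟫ := fun y hyt => by
      rw [real_inner_comm]
      by_contra! h
      exact hy y hyt (RS.add_mem_Rpos_of_inner_neg (ht y hyt) hδ h)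
    have hiδ : ∀ i, 0 ≤ ⟪δ, β i⟫ := fun i => by
      rw [real_inner_comm]
      by_contra! h
      exact hi i (RS.add_mem_Rpos_of_inner_neg (hβ i) hδ h)
    have hexpand : ⟪γ, δ⟫ = ∑ i, ⟪δ, β i⟫ + ⟪δ, δ⟫ + ⟪δ, t.sum⟫ := by
      rw [real_inner_comm, ← inner_sum]
      simp only [γ, Multiset.sum_cons, inner_add_right]
      ring
    have hδδ := real_inner_self_pos.2 (RS.ne_zero_of_mem_R hδ.1)
    have hβ_sum := Finset.sum_nonneg fun i (_ : i ∈ Finset.univ) => hiδ i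
    have ht_sum := real_inner_multiset_sum_nonneg hyδ
    linarith

theorem exists_ge_Rpos_sum_mem [Nonempty ι] (β : ι → EuclideanSpace ℝ (Fin n))
    (hβ : ∀ i, β i ∈ RS.Rpos) (s : Multiset (EuclideanSpace ℝ (Fin n)))
    (hs : ∀ y ∈ s, y ∈ RS.Rpos) (hsum : ∑ i, β i + s.sum ∈ RS.R) :
    ∃ g : ι → EuclideanSpace ℝ (Fin n),
      (∀ i, g i ∈ RS.Rpos) ∧ (∀ i, RS.le (β i) (g i)) ∧ ∑ i, g i ∈ RS.R := by
  rcases Multiset.empty_or_exists_mem s with rfl | ⟨δ, hδs⟩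
  · exact ⟨β, hβ, fun i => le.refl RS (β i), by simpa using hsum⟩
  obtain ⟨t, rfl⟩ := Multiset.exists_cons_of_mem hδs
  have hδ : δ ∈ RS.Rpos := hs δ (Multiset.mem_cons_self δ t)
  have ht : ∀ y ∈ t, y ∈ RS.Rpos := fun y hy => hs y (Multiset.mem_cons_of_mem hy)
  rcases RS.sum_add_sum_mem_or_exists_add_mem_Rpos hβ hδ ht hsum with
    hdrop | ⟨y, hyt, hyδ⟩ | ⟨i, hiδ⟩
  · exact exists_ge_Rpos_sum_mem β hβ t ht hdrop
  · have hmerge : ∑ i, β i + ((y + δ) ::ₘ t.erase y).sum = ∑ i, β i + (δ ::ₘ t).sum := by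
      rw [← Multiset.cons_erase hyt]
      simp only [Multiset.sum_cons, Multiset.erase_cons_head]
      abel
    refine exists_ge_Rpos_sum_mem β hβ ((y + δ) ::ₘ t.erase y) (fun z hz => ?_) (hmerge ▸ hsum)
    rcases Multiset.mem_cons.1 hz with rfl | hz
    exacts [hyδ, ht z (Multiset.mem_of_mem_erase hz)]
  · classical
    set β' := Function.update β i (β i + δ)
    have hβ' : ∀ j, β' j ∈ RS.Rpos := fun j => by
      rcases eq_or_ne j i with rfl | hj
      · simpa [β'] using hiδ
      · simpa [β', hj] using hβ j
    have hββ' : ∀ j, RS.le (β j) (β' j) := fun j => by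
      rcases eq_or_ne j i with rfl | hj
      · simpa [β'] using le_add_of_mem_Qplus (β j) hδ.2
      · simpa [β', hj] using le.refl RS (β j)
    have hsum' : ∑ j, β' j + t.sum = ∑ j, β j + (δ ::ₘ t).sum := by
      rw [Finset.sum_update_of_mem (Finset.mem_univ i),
        Finset.sum_eq_add_sum_sdiff_singleton_of_mem (Finset.mem_univ i), Multiset.sum_cons]
      abel
    obtain ⟨g, hg, hβ'g, hgR⟩ := exists_ge_Rpos_sum_mem β' hβ' t ht (hsum' ▸ hsum)
    exact ⟨g, hg, fun j => (hββ' j).trans (hβ'g j), hgR⟩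
termination_by Multiset.card s
decreasing_by
  all_goals subst_vars; simp only [Multiset.card_cons]
  · omega
  · rw [Multiset.card_erase_add_one hyt]
    omega
  · omega

end BasedRootSys

/-- An antichain `A` generates an ideal of nilpotence `k` iff no sum of `k+1`
(not necessarily distinct) elements of `A` is `≤ θ`. -/
theorem stmt_6 {n : ℕ} (RS : BasedRootSys n) (θ : EuclideanSpace ℝ (Fin n))
    (hθpos : θ ∈ RS.Rpos) (hθmax : ∀ α ∈ RS.R, RS.le α θ)
    (A : Set (EuclideanSpace ℝ (Fin n))) (hA : RS.IsJAntichain ∅ A) (k : ℕ) :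
    (∀ f : Fin (k + 1) → EuclideanSpace ℝ (Fin n),
        (∀ p, f p ∈ RS.PhiOf A) → ∑ p, f p ∉ RS.R) ↔
    (∀ f : Fin (k + 1) → EuclideanSpace ℝ (Fin n),
        (∀ p, f p ∈ A) → ¬ RS.le (∑ p, f p) θ) := by
  constructor
  · intro hnil a ha hle
    obtain ⟨s, hs, hs_sum⟩ := RS.exists_multiset_Rpos_sum_eq hle
    obtain ⟨g, hg, hag, hgR⟩ := RS.exists_ge_Rpos_sum_mem a (fun p => hA.1 (ha p)) s hs
      (by rw [hs_sum, add_sub_cancel]; exact hθpos.1)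
    exact hnil g (fun p => ⟨hg p, a p, ha p, hag p⟩) hgR
  · intro hA_sum f hf hfR
    choose a ha haf using fun p => (hf p).2
    exact hA_sum a ha ((BasedRootSys.sum_le_sum haf).trans (hθmax _ hfR))
end

section
/- In the root system of type A_n, the total number of abelian antichains in R⁺ (including the empty one) is 2^n. -/
/-!
Write the positive root `α_{i,j} = ε_i - ε_{j+1}` as the interval `[i, j]`. Partial sums of
coordinates are nonnegative on `Q⁺`, so dominance between positive roots is containment of
intervals, and `α_{i,j} + α_{k,l}` is a root exactly when the two intervals are adjacent. Hence an
abelian antichain is a family of intervals, none containing another, that pairwise intersect: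
`i_1 < ⋯ < i_m ≤ j_1 < ⋯ < j_m`. Such a family is determined by its `2m` endpoints
`i_1, …, i_m, j_1 + 1, …, j_m + 1` in `{0, …, n}`, the `r`-th smallest being matched with the
`(m + r)`-th, and every subset of even size arises; an `(n + 1)`-element set has `2^n` of them.
-/

noncomputable section

/-- Standard basis vector `ε_i` of `ℝ^{n+1}`. -/
def eps (n : ℕ) (i : Fin (n + 1)) : EuclideanSpace ℝ (Fin (n + 1)) :=
  EuclideanSpace.single i 1

/-- The root system of type `A_n`: the vectors `ε_i - ε_j`, `i ≠ j`. -/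
def typeA (n : ℕ) : Set (EuclideanSpace ℝ (Fin (n + 1))) :=
  {v | ∃ i j : Fin (n + 1), i ≠ j ∧ v = eps n i - eps n j}

/-- The positive roots of type `A_n`. -/
def posA (n : ℕ) : Set (EuclideanSpace ℝ (Fin (n + 1))) :=
  {v | ∃ i j : Fin (n + 1), i < j ∧ v = eps n i - eps n j}

/-- The simple roots `α_i = ε_i - ε_{i+1}` of type `A_n`. -/
def simpleA (n : ℕ) (i : Fin n) : EuclideanSpace ℝ (Fin (n + 1)) :=
  eps n i.castSucc - eps n i.succ

/-- The positive root `α_{i,j} = α_i + ⋯ + α_j = ε_i - ε_{j+1}`. -/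
def alphaA (n : ℕ) (i j : Fin n) : EuclideanSpace ℝ (Fin (n + 1)) :=
  eps n i.castSucc - eps n j.succ

/-- `Q⁺` for type `A_n`. -/
def QplusA (n : ℕ) : AddSubmonoid (EuclideanSpace ℝ (Fin (n + 1))) :=
  AddSubmonoid.closure (Set.range (simpleA n))

/-- The dominance order for type `A_n`. -/
def leA (n : ℕ) (α β : EuclideanSpace ℝ (Fin (n + 1))) : Prop :=
  β - α ∈ QplusA n

/-- An antichain in the positive roots of type `A_n`. -/
def IsAntichainA (n : ℕ) (A : Set (EuclideanSpace ℝ (Fin (n + 1)))) : Prop :=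
  A ⊆ posA n ∧ ∀ α ∈ A, ∀ β ∈ A, α ≠ β → ¬ leA n α β

/-- The ideal `Φ(A)` generated by `A`, for type `A_n`. -/
def PhiOfA (n : ℕ) (A : Set (EuclideanSpace ℝ (Fin (n + 1)))) :
    Set (EuclideanSpace ℝ (Fin (n + 1))) :=
  {α ∈ posA n | ∃ β ∈ A, leA n β α}

/-- An abelian antichain in type `A_n`: an antichain whose generated ideal `Φ(A)`
contains no two (not necessarily distinct) elements summing to a root. -/
def IsAbelianAntichainA (n : ℕ) (A : Set (EuclideanSpace ℝ (Fin (n + 1)))) : Prop :=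
  IsAntichainA n A ∧ ∀ α ∈ PhiOfA n A, ∀ β ∈ PhiOfA n A, α + β ∉ typeA n

end

namespace Finset

variable {α : Type*}

theorem two_mul_card_filter_even_card_powerset [DecidableEq α] {s : Finset α}
    (hs : s.Nonempty) : 2 * #{t ∈ s.powerset | Even #t} = 2 ^ #s := by
  have hsum := sum_filter_add_sum_filter_not s.powerset (fun t => Even #t) fun t => (-1 : ℤ) ^ #t
  rw [sum_powerset_neg_one_pow_card_of_nonempty hs,
    sum_congr rfl fun t ht => (mem_filter.mp ht).2.neg_one_pow,
    sum_congr rfl fun t ht => (Nat.not_even_iff_odd.mp (mem_filter.mp ht).2).neg_one_pow,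
    sum_const, sum_const, nsmul_eq_mul, nsmul_eq_mul] at hsum
  have hcard := card_filter_add_card_filter_not (s := s.powerset) fun t => Even #t
  rw [card_powerset] at hcard
  omega

section LinearOrder

variable [LinearOrder α]

def rank (T : Finset α) (x : α) : ℕ := #{y ∈ T | y ≤ x}

lemma rank_strictMonoOn (T : Finset α) : StrictMonoOn (rank T) T := fun x _ y hy hxy => by
  refine card_lt_card ⟨monotone_filter_right T fun _ _ hz => hz.trans hxy.le, fun h => ?_⟩
  exact (mem_filter.mp (h (mem_filter.mpr ⟨hy, le_rfl⟩))).2.not_gt hxy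

end LinearOrder

end Finset

namespace TypeA

open Finset

variable {n : ℕ}

lemma eps_apply (p a : Fin (n + 1)) : eps n p a = if a = p then 1 else 0 :=
  PiLp.single_apply 2 ℝ p 1 a

def partialSum (t : Fin (n + 1)) : EuclideanSpace ℝ (Fin (n + 1)) →+ ℝ where
  toFun v := ∑ a ∈ Iic t, v a
  map_zero' := by simp
  map_add' x y := by simp [sum_add_distrib]

lemma partialSum_eps_sub_eps (t p q : Fin (n + 1)) :
    partialSum t (eps n p - eps n q) = (if p ≤ t then 1 else 0) - (if q ≤ t then 1 else 0) := by
  simp [partialSum, eps_apply, sum_ite_eq', sum_sub_distrib]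

lemma partialSum_nonneg {v : EuclideanSpace ℝ (Fin (n + 1))} (hv : v ∈ QplusA n)
    (t : Fin (n + 1)) : 0 ≤ partialSum t v := by
  induction hv using AddSubmonoid.closure_induction with
  | mem _ hx =>
    obtain ⟨i, rfl⟩ := hx
    have hle : i.succ ≤ t → i.castSucc ≤ t := (Fin.castSucc_le_succ i).trans
    rw [simpleA, partialSum_eps_sub_eps]
    split_ifs <;> simp_all
  | zero => simp
  | add _ _ _ _ hx hy => rw [map_add]; positivity

lemma eps_sub_eps_mem_QplusA {p q : Fin (n + 1)} (hpq : p ≤ q) : eps n p - eps n q ∈ QplusA n := by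
  induction q using Fin.induction with
  | zero => simp [le_antisymm hpq (Fin.zero_le p)]
  | succ r ih =>
    rcases hpq.lt_or_eq with hlt | rfl
    · have hsimple : simpleA n r ∈ QplusA n := AddSubmonoid.subset_closure ⟨r, rfl⟩
      have := (QplusA n).add_mem (ih (Fin.le_castSucc_iff.mpr hlt)) hsimple
      rwa [simpleA, sub_add_sub_cancel] at this
    · simp

lemma alphaA_sub_alphaA (i j k l : Fin n) :
    alphaA n k l - alphaA n i j =
      (eps n k.castSucc - eps n i.castSucc) + (eps n j.succ - eps n l.succ) := by
  unfold alphaA; abel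

theorem leA_alphaA_iff {i j k l : Fin n} (hij : i ≤ j) (hkl : k ≤ l) :
    leA n (alphaA n i j) (alphaA n k l) ↔ k ≤ i ∧ j ≤ l := by
  refine ⟨fun h => ?_, fun ⟨hki, hjl⟩ => ?_⟩
  · have hi := partialSum_nonneg h i.castSucc
    have hj := partialSum_nonneg h j.castSucc
    rw [alphaA_sub_alphaA, map_add, partialSum_eps_sub_eps, partialSum_eps_sub_eps] at hi hj
    simp only [Fin.le_def, Fin.val_castSucc, Fin.val_succ] at hi hj ⊢
    rw [Fin.le_def] at hij hkl
    constructor <;> by_contra <;> split_ifs at hi hj <;> first | omega | linarith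
  · rw [leA, alphaA_sub_alphaA]
    exact (QplusA n).add_mem (eps_sub_eps_mem_QplusA (Fin.castSucc_le_castSucc_iff.mpr hki))
      (eps_sub_eps_mem_QplusA (Fin.succ_le_succ_iff.mpr hjl))

lemma leA_refl (v : EuclideanSpace ℝ (Fin (n + 1))) : leA n v v := by
  simp [leA, (QplusA n).zero_mem]

lemma alphaA_inj {i j k l : Fin n} (hij : i ≤ j) (hkl : k ≤ l)
    (h : alphaA n i j = alphaA n k l) : i = k ∧ j = l := by
  have h₁ := (leA_alphaA_iff hij hkl).mp (h ▸ leA_refl _)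
  have h₂ := (leA_alphaA_iff hkl hij).mp (h ▸ leA_refl _)
  exact ⟨le_antisymm h₂.1 h₁.1, le_antisymm h₁.2 h₂.2⟩

lemma mem_posA_iff {v : EuclideanSpace ℝ (Fin (n + 1))} :
    v ∈ posA n ↔ ∃ i j : Fin n, i ≤ j ∧ v = alphaA n i j := by
  constructor
  · rintro ⟨a, b, hab, rfl⟩
    have ha : a ≠ Fin.last n := Fin.ne_last_of_lt hab
    have hb : b ≠ 0 := Fin.ne_zero_of_lt hab
    refine ⟨a.castPred ha, b.pred hb, (Fin.castPred_le_pred_iff ha hb).mpr hab, ?_⟩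
    simp [alphaA]
  · rintro ⟨i, j, hij, rfl⟩
    exact ⟨i.castSucc, j.succ, Fin.castSucc_lt_succ_iff.mpr hij, rfl⟩

theorem alphaA_add_alphaA_mem_typeA_iff {i j k l : Fin n} (hij : i ≤ j) (hkl : k ≤ l) :
    alphaA n i j + alphaA n k l ∈ typeA n ↔ j.succ = k.castSucc ∨ l.succ = i.castSucc := by
  have hji : j.succ ≠ i.castSucc := (Fin.castSucc_lt_succ_iff.mpr hij).ne'
  have hlk : l.succ ≠ k.castSucc := (Fin.castSucc_lt_succ_iff.mpr hkl).ne'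
  constructor
  · rintro ⟨a, b, hab, hv⟩
    by_contra! h
    -- otherwise coordinates `j + 1` and `l + 1` of the sum are negative, so both must be `b`
    have hj := congrArg (· j.succ) hv
    have hl := congrArg (· l.succ) hv
    simp only [alphaA, PiLp.add_apply, PiLp.sub_apply, eps_apply, if_neg hji, if_neg hlk,
      if_neg h.1, if_neg h.2, if_true] at hj hl
    by_cases hjl : j.succ = l.succ
    · rw [if_pos hjl] at hj
      split_ifs at hj <;> linarith
    · rw [if_neg hjl] at hj
      rw [if_neg (Ne.symm hjl)] at hl
      split_ifs at hj hl <;> first | linarith | simp_all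
  · rintro (h | h)
    · refine ⟨i.castSucc, l.succ, ?_, by simp only [alphaA, h]; abel⟩
      simp only [ne_eq, Fin.ext_iff, Fin.val_castSucc, Fin.val_succ] at h ⊢
      rw [Fin.le_def] at hij hkl
      omega
    · refine ⟨k.castSucc, j.succ, ?_, by simp only [alphaA, h]; abel⟩
      simp only [ne_eq, Fin.ext_iff, Fin.val_castSucc, Fin.val_succ] at h ⊢
      rw [Fin.le_def] at hij hkl
      omega

/-- `p` stands for the interval `[p.1, p.2]` of `Fin n`, that is, for the root `alphaA n p.1 p.2`;
the second condition with `p = q` says that the interval is nonempty. -/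
def IsIntersectingAntichain (S : Finset (Fin n × Fin n)) : Prop :=
  (∀ p ∈ S, ∀ q ∈ S, p ≠ q → ¬(q.1 ≤ p.1 ∧ p.2 ≤ q.2)) ∧ ∀ p ∈ S, ∀ q ∈ S, q.1 ≤ p.2

def toRoots (S : Finset (Fin n × Fin n)) : Set (EuclideanSpace ℝ (Fin (n + 1))) :=
  (fun p : Fin n × Fin n => alphaA n p.1 p.2) '' S

open scoped Classical in
noncomputable def ofRoots (A : Set (EuclideanSpace ℝ (Fin (n + 1)))) : Finset (Fin n × Fin n) :=
  univ.filter fun p => p.1 ≤ p.2 ∧ alphaA n p.1 p.2 ∈ A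

lemma mem_ofRoots {A : Set (EuclideanSpace ℝ (Fin (n + 1)))} {p : Fin n × Fin n} :
    p ∈ ofRoots A ↔ p.1 ≤ p.2 ∧ alphaA n p.1 p.2 ∈ A := by
  simp [ofRoots]

namespace IsIntersectingAntichain

variable {S : Finset (Fin n × Fin n)} (hS : IsIntersectingAntichain S)
include hS

lemma fst_le_snd {p : Fin n × Fin n} (hp : p ∈ S) : p.1 ≤ p.2 := hS.2 p hp p hp

lemma isAbelianAntichainA_toRoots : IsAbelianAntichainA n (toRoots S) := by
  refine ⟨⟨?_, ?_⟩, ?_⟩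
  · rintro _ ⟨p, hp, rfl⟩
    exact mem_posA_iff.mpr ⟨p.1, p.2, hS.fst_le_snd hp, rfl⟩
  · rintro _ ⟨p, hp, rfl⟩ _ ⟨q, hq, rfl⟩ hne hle
    rw [leA_alphaA_iff (hS.fst_le_snd hp) (hS.fst_le_snd hq)] at hle
    exact hS.1 p hp q hq (by rintro rfl; exact hne rfl) hle
  · rintro _ ⟨hα, _, ⟨p, hp, rfl⟩, hpα⟩ _ ⟨hβ, _, ⟨q, hq, rfl⟩, hqβ⟩ hsum
    obtain ⟨a, b, hab, rfl⟩ := mem_posA_iff.mp hα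
    obtain ⟨c, d, hcd, rfl⟩ := mem_posA_iff.mp hβ
    rw [leA_alphaA_iff (hS.fst_le_snd hp) hab] at hpα
    rw [leA_alphaA_iff (hS.fst_le_snd hq) hcd] at hqβ
    have hcb : c ≤ b := hqβ.1.trans ((hS.2 p hp q hq).trans hpα.2)
    have had : a ≤ d := hpα.1.trans ((hS.2 q hq p hp).trans hqβ.2)
    rcases (alphaA_add_alphaA_mem_typeA_iff hab hcd).mp hsum with h | h
    · exact (Fin.succ_le_castSucc_iff.mp h.le).not_ge hcb
    · exact (Fin.succ_le_castSucc_iff.mp h.le).not_ge had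

lemma ofRoots_toRoots : ofRoots (toRoots S) = S := by
  ext p
  rw [mem_ofRoots]
  constructor
  · rintro ⟨hp, q, hq, he⟩
    obtain ⟨h₁, h₂⟩ := alphaA_inj (hS.fst_le_snd hq) hp he
    rwa [← Prod.ext h₁ h₂]
  · intro hp
    exact ⟨hS.fst_le_snd hp, p, hp, rfl⟩

end IsIntersectingAntichain

section

variable {A : Set (EuclideanSpace ℝ (Fin (n + 1)))} (hA : IsAbelianAntichainA n A)
include hA

lemma isIntersectingAntichain_ofRoots : IsIntersectingAntichain (ofRoots A) := by
  constructor
  · intro p hp q hq hne hle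
    rw [mem_ofRoots] at hp hq
    refine hA.1.2 _ hp.2 _ hq.2 (fun he => hne ?_) ((leA_alphaA_iff hp.1 hq.1).mpr hle)
    obtain ⟨h₁, h₂⟩ := alphaA_inj hp.1 hq.1 he
    exact Prod.ext h₁ h₂
  · intro p hp q hq
    rw [mem_ofRoots] at hp hq
    by_contra! hlt
    -- if `[p.1, p.2]` lies left of `[q.1, q.2]`, stretching it to end just before `q.1` gives
    -- a root of `Φ(A)` adjacent to `α_q`
    have hq₁ : q.1.castSucc ≠ 0 := Fin.ne_zero_of_lt (Fin.castSucc_lt_castSucc_iff.mpr hlt)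
    obtain ⟨k, hk⟩ : ∃ k : Fin n, k.succ = q.1.castSucc := ⟨_, Fin.succ_pred _ hq₁⟩
    have hpk : p.2 ≤ k := by
      rwa [← Fin.succ_le_succ_iff, hk, Fin.succ_le_castSucc_iff]
    have hα : alphaA n p.1 k ∈ PhiOfA n A :=
      ⟨mem_posA_iff.mpr ⟨p.1, k, hp.1.trans hpk, rfl⟩, _, hp.2,
        (leA_alphaA_iff hp.1 (hp.1.trans hpk)).mpr ⟨le_rfl, hpk⟩⟩
    have hβ : alphaA n q.1 q.2 ∈ PhiOfA n A :=
      ⟨mem_posA_iff.mpr ⟨q.1, q.2, hq.1, rfl⟩, _, hq.2, leA_refl _⟩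
    exact hA.2 _ hα _ hβ ((alphaA_add_alphaA_mem_typeA_iff (hp.1.trans hpk) hq.1).mpr (Or.inl hk))

lemma toRoots_ofRoots : toRoots (ofRoots A) = A := by
  ext α
  constructor
  · rintro ⟨p, hp, rfl⟩
    exact (mem_ofRoots.mp hp).2
  · intro hα
    obtain ⟨i, j, hij, rfl⟩ := mem_posA_iff.mp (hA.1.1 hα)
    exact ⟨(i, j), mem_ofRoots.mpr ⟨hij, hα⟩, rfl⟩

end

theorem ncard_isAbelianAntichainA :
    {A | IsAbelianAntichainA n A}.ncard =
      {S : Finset (Fin n × Fin n) | IsIntersectingAntichain S}.ncard := by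
  have himage : toRoots '' {S | IsIntersectingAntichain S} = {A | IsAbelianAntichainA n A} :=
    Set.ext fun A => ⟨by rintro ⟨S, hS, rfl⟩; exact hS.isAbelianAntichainA_toRoots,
      fun hA => ⟨ofRoots A, isIntersectingAntichain_ofRoots hA, toRoots_ofRoots hA⟩⟩
  rw [← himage, Set.InjOn.ncard_image]
  exact Set.LeftInvOn.injOn (f₁' := ofRoots) fun S hS => IsIntersectingAntichain.ofRoots_toRoots hS

def endpoints (S : Finset (Fin n × Fin n)) : Finset (Fin (n + 1)) :=
  S.image (fun p => p.1.castSucc) ∪ S.image (fun p => p.2.succ)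

namespace IsIntersectingAntichain

variable {S : Finset (Fin n × Fin n)} (hS : IsIntersectingAntichain S)
include hS

lemma fst_injOn : Set.InjOn Prod.fst (S : Set (Fin n × Fin n)) := by
  intro p hp q hq h
  by_contra hne
  rcases le_total p.2 q.2 with h₂ | h₂
  · exact hS.1 p hp q hq hne ⟨h.ge, h₂⟩
  · exact hS.1 q hq p hp (Ne.symm hne) ⟨h.le, h₂⟩

lemma snd_injOn : Set.InjOn Prod.snd (S : Set (Fin n × Fin n)) := by
  intro p hp q hq h
  by_contra hne
  rcases le_total p.1 q.1 with h₁ | h₁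
  · exact hS.1 q hq p hp (Ne.symm hne) ⟨h₁, h.ge⟩
  · exact hS.1 p hp q hq hne ⟨h₁, h.le⟩

lemma castSucc_fst_lt_succ_snd {p q : Fin n × Fin n} (hp : p ∈ S) (hq : q ∈ S) :
    p.1.castSucc < q.2.succ :=
  Fin.castSucc_lt_succ_iff.mpr (hS.2 q hq p hp)

lemma disjoint_image_castSucc_fst_succ_snd (S' : Finset (Fin n × Fin n)) (hS' : S' ⊆ S) :
    Disjoint (S.image fun p => p.1.castSucc) (S'.image fun p => p.2.succ) := by
  simp only [disjoint_left, mem_image, not_exists, not_and]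
  rintro _ ⟨p, hp, rfl⟩ q hq
  exact (hS.castSucc_fst_lt_succ_snd hp (hS' hq)).ne'

lemma card_image_castSucc_fst (S' : Finset (Fin n × Fin n)) (hS' : S' ⊆ S) :
    #(S'.image fun p => p.1.castSucc) = #S' :=
  card_image_of_injOn fun _ hp _ hq h =>
    hS.fst_injOn (hS' hp) (hS' hq) (Fin.castSucc_injective _ h)

lemma card_image_succ_snd (S' : Finset (Fin n × Fin n)) (hS' : S' ⊆ S) :
    #(S'.image fun p => p.2.succ) = #S' :=
  card_image_of_injOn fun _ hp _ hq h =>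
    hS.snd_injOn (hS' hp) (hS' hq) (Fin.succ_injective _ h)

lemma card_endpoints : #(endpoints S) = 2 * #S := by
  rw [endpoints, card_union_of_disjoint (hS.disjoint_image_castSucc_fst_succ_snd S subset_rfl),
    hS.card_image_castSucc_fst S subset_rfl, hS.card_image_succ_snd S subset_rfl, two_mul]

lemma filter_fst_le_eq_filter_snd_le {p : Fin n × Fin n} (hp : p ∈ S) :
    {q ∈ S | q.1 ≤ p.1} = {q ∈ S | q.2 ≤ p.2} := by
  refine filter_congr fun q hq => ?_
  rcases eq_or_ne q p with rfl | hne
  · exact iff_of_true le_rfl le_rfl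
  constructor
  · exact fun h₁ => le_of_not_gt fun h₂ => hS.1 p hp q hq hne.symm ⟨h₁, h₂.le⟩
  · exact fun h₂ => le_of_not_gt fun h₁ => hS.1 q hq p hp hne ⟨h₁.le, h₂⟩

lemma rank_endpoints_castSucc_fst {p : Fin n × Fin n} (hp : p ∈ S) :
    rank (endpoints S) p.1.castSucc = #{q ∈ S | q.1 ≤ p.1} := by
  have : {x ∈ endpoints S | x ≤ p.1.castSucc} =
      {q ∈ S | q.1 ≤ p.1}.image fun q => q.1.castSucc := by
    ext x
    simp only [endpoints, mem_filter, mem_union, mem_image]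
    constructor
    · rintro ⟨⟨q, hq, rfl⟩ | ⟨q, hq, rfl⟩, hx⟩
      · exact ⟨q, ⟨hq, Fin.castSucc_le_castSucc_iff.mp hx⟩, rfl⟩
      · exact absurd hx (hS.castSucc_fst_lt_succ_snd hp hq).not_ge
    · rintro ⟨q, ⟨hq, hle⟩, rfl⟩
      exact ⟨Or.inl ⟨q, hq, rfl⟩, Fin.castSucc_le_castSucc_iff.mpr hle⟩
  rw [rank, this, hS.card_image_castSucc_fst _ (filter_subset _ _)]

lemma rank_endpoints_succ_snd {p : Fin n × Fin n} (hp : p ∈ S) :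
    rank (endpoints S) p.2.succ = #S + #{q ∈ S | q.2 ≤ p.2} := by
  have : {x ∈ endpoints S | x ≤ p.2.succ} =
      S.image (fun q => q.1.castSucc) ∪ {q ∈ S | q.2 ≤ p.2}.image fun q => q.2.succ := by
    ext x
    simp only [endpoints, mem_filter, mem_union, mem_image]
    constructor
    · rintro ⟨⟨q, hq, rfl⟩ | ⟨q, hq, rfl⟩, hx⟩
      · exact Or.inl ⟨q, hq, rfl⟩
      · exact Or.inr ⟨q, ⟨hq, Fin.succ_le_succ_iff.mp hx⟩, rfl⟩
    · rintro (⟨q, hq, rfl⟩ | ⟨q, ⟨hq, hle⟩, rfl⟩)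
      · exact ⟨Or.inl ⟨q, hq, rfl⟩, (hS.castSucc_fst_lt_succ_snd hq hp).le⟩
      · exact ⟨Or.inr ⟨q, hq, rfl⟩, Fin.succ_le_succ_iff.mpr hle⟩
  rw [rank, this,
    card_union_of_disjoint (hS.disjoint_image_castSucc_fst_succ_snd _ (filter_subset _ _)),
    hS.card_image_castSucc_fst S subset_rfl, hS.card_image_succ_snd _ (filter_subset _ _)]

lemma rank_endpoints_succ_snd_eq {p : Fin n × Fin n} (hp : p ∈ S) :
    rank (endpoints S) p.2.succ = rank (endpoints S) p.1.castSucc + #S := by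
  rw [hS.rank_endpoints_succ_snd hp, hS.rank_endpoints_castSucc_fst hp,
    hS.filter_fst_le_eq_filter_snd_le hp, add_comm]

lemma rank_endpoints_castSucc_fst_le {p : Fin n × Fin n} (hp : p ∈ S) :
    rank (endpoints S) p.1.castSucc ≤ #S :=
  (hS.rank_endpoints_castSucc_fst hp).trans_le (card_filter_le _ _)

lemma card_lt_rank_endpoints_succ_snd {p : Fin n × Fin n} (hp : p ∈ S) :
    #S < rank (endpoints S) p.2.succ := by
  rw [hS.rank_endpoints_succ_snd hp, Nat.lt_add_right_iff_pos, card_pos]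
  exact ⟨p, mem_filter.mpr ⟨hp, le_rfl⟩⟩

lemma exists_castSucc_fst_eq {x : Fin (n + 1)} (hx : x ∈ endpoints S)
    (hrank : rank (endpoints S) x ≤ #S) : ∃ q ∈ S, q.1.castSucc = x := by
  simp only [endpoints, mem_union, mem_image] at hx
  rcases hx with hx | ⟨q, hq, rfl⟩
  · exact hx
  · exact absurd hrank (hS.card_lt_rank_endpoints_succ_snd hq).not_ge

end IsIntersectingAntichain

lemma mem_of_endpoints_eq {S₁ S₂ : Finset (Fin n × Fin n)} (hS₁ : IsIntersectingAntichain S₁)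
    (hS₂ : IsIntersectingAntichain S₂) (h : endpoints S₁ = endpoints S₂) {p : Fin n × Fin n}
    (hp : p ∈ S₁) : p ∈ S₂ := by
  have hcard : #S₁ = #S₂ := by
    have := hS₁.card_endpoints
    rw [h, hS₂.card_endpoints] at this
    omega
  have mem_endpoints : p.1.castSucc ∈ endpoints S₂ ∧ p.2.succ ∈ endpoints S₂ := by
    rw [← h]
    simp only [endpoints, mem_union, mem_image]
    exact ⟨Or.inl ⟨p, hp, rfl⟩, Or.inr ⟨p, hp, rfl⟩⟩
  obtain ⟨q, hq, hpq⟩ := hS₂.exists_castSucc_fst_eq mem_endpoints.1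
    (hcard ▸ h ▸ hS₁.rank_endpoints_castSucc_fst_le hp)
  have hrank : rank (endpoints S₂) p.2.succ = rank (endpoints S₂) q.2.succ := by
    rw [← h, hS₁.rank_endpoints_succ_snd_eq hp, h, hS₂.rank_endpoints_succ_snd_eq hq, hpq, hcard]
  have hq₂ : q.2.succ ∈ endpoints S₂ := mem_union_right _ (mem_image_of_mem _ hq)
  have h₂ := Fin.succ_injective _ ((rank_strictMonoOn _).injOn mem_endpoints.2 hq₂ hrank)
  rwa [Prod.ext (Fin.castSucc_injective _ hpq).symm h₂]

lemma endpoints_injOn :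
    Set.InjOn endpoints {S : Finset (Fin n × Fin n) | IsIntersectingAntichain S} :=
  fun _ hS₁ _ hS₂ h => Subset.antisymm (fun _ => mem_of_endpoints_eq hS₁ hS₂ h)
    (fun _ => mem_of_endpoints_eq hS₂ hS₁ h.symm)

lemma isIntersectingAntichain_image {m : ℕ} {a b : Fin m → Fin n} (ha : StrictMono a)
    (hb : StrictMono b) (hab : ∀ s t, a s ≤ b t) :
    IsIntersectingAntichain (univ.image fun t => (a t, b t)) := by
  simp only [IsIntersectingAntichain, mem_image, mem_univ, true_and, forall_exists_index,
    forall_apply_eq_imp_iff]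
  refine ⟨fun s t hne ⟨h₁, h₂⟩ => ?_, fun s t => hab t s⟩
  rcases lt_trichotomy s t with hst | rfl | hst
  · exact (ha hst).not_ge h₁
  · exact hne rfl
  · exact (hb hst).not_ge h₂

lemma exists_endpoints_eq {m : ℕ} {T : Finset (Fin (n + 1))} (hT : #T = m + m) :
    ∃ S, IsIntersectingAntichain S ∧ endpoints S = T := by
  set e := T.orderEmbOfFin hT
  have hlt : ∀ s t, e (Fin.castAdd m s) < e (Fin.natAdd m t) := fun s t =>
    e.strictMono (by simp [Fin.lt_def]; omega)
  let a (t : Fin m) : Fin n := (e (Fin.castAdd m t)).castPred (Fin.ne_last_of_lt (hlt t t))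
  let b (t : Fin m) : Fin n := (e (Fin.natAdd m t)).pred (Fin.ne_zero_of_lt (hlt t t))
  have ha : StrictMono a := fun s t hst =>
    Fin.castPred_lt_castPred_iff.mpr (e.strictMono (Fin.strictMono_castAdd m hst))
  have hb : StrictMono b := fun s t hst =>
    Fin.pred_lt_pred_iff.mpr (e.strictMono (Fin.strictMono_natAdd m hst))
  refine ⟨_, isIntersectingAntichain_image ha hb
    fun s t => (Fin.castPred_le_pred_iff _ _).mpr (hlt s t), ?_⟩
  rw [← T.image_orderEmbOfFin_univ hT]
  ext x
  simp only [endpoints, mem_union, mem_image, mem_univ, true_and, exists_exists_eq_and,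
    a, b, Fin.castSucc_castPred, Fin.succ_pred]
  constructor
  · rintro (⟨t, rfl⟩ | ⟨t, rfl⟩) <;> exact ⟨_, rfl⟩
  · rintro ⟨k, rfl⟩
    induction k using Fin.addCases with
    | left t => exact Or.inl ⟨t, rfl⟩
    | right t => exact Or.inr ⟨t, rfl⟩

theorem ncard_isIntersectingAntichain :
    {S : Finset (Fin n × Fin n) | IsIntersectingAntichain S}.ncard =
      {T : Finset (Fin (n + 1)) | Even #T}.ncard := by
  have himage : endpoints '' {S : Finset (Fin n × Fin n) | IsIntersectingAntichain S} =
      {T : Finset (Fin (n + 1)) | Even #T} := by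
    ext T
    constructor
    · rintro ⟨S, hS, rfl⟩
      exact ⟨#S, by rw [hS.card_endpoints, two_mul]⟩
    · rintro ⟨m, hm⟩
      exact exists_endpoints_eq hm
  rw [← himage, endpoints_injOn.ncard_image]

end TypeA

/-- In type `A_n`, the total number of abelian antichains in `R⁺`
(including the empty one) is `2^n`. -/
theorem stmt_9 (n : ℕ) :
    {A : Set (EuclideanSpace ℝ (Fin (n + 1))) | IsAbelianAntichainA n A}.ncard =
      2 ^ n := by
  rw [TypeA.ncard_isAbelianAntichainA, TypeA.ncard_isIntersectingAntichain,
    Set.ncard_eq_toFinset_card', Set.toFinset_ofPred]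
  have hcount :=
    Finset.two_mul_card_filter_even_card_powerset (Finset.univ_nonempty (α := Fin (n + 1)))
  rw [Finset.powerset_univ, Finset.card_univ, Fintype.card_fin, pow_succ] at hcount
  omega
end
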